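/- Let w = s_{i_1}···s_{i_m} be a reduced word for an element w of a Coxeter group. For indices j and ℓ, the elements u obtained by deleting the j-th letter and v obtained by deleting the ℓ-th letter from this reduced word are equal if and only if j = ℓ. -/
import Mathlib

/-- If `ω` is a reduced word for an element of a Coxeter group, then deleting the `j`-th
letter and deleting the `ℓ`-th letter yield the same group element if and only if
`j = ℓ`. -/
theorem eraseIdx_reduced_word_inj {B W : Type*} [Group W] {M : CoxeterMatrix B}
    (cs : CoxeterSystem M W) (ω : List B) (hred : cs.IsReduced ω)
    (j l : ℕ) (hj : j < ω.length) (hl : l < ω.length) :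
    cs.wordProd (ω.eraseIdx j) = cs.wordProd (ω.eraseIdx l) ↔ j = l := by
  constructor
  · intro h
    rw [← cs.wordProd_mul_getD_rightInvSeq ω j,
        ← cs.wordProd_mul_getD_rightInvSeq ω l] at h
    have h' : (cs.rightInvSeq ω).getD j 1 = (cs.rightInvSeq ω).getD l 1 :=
      mul_left_cancel h
    have hnd := hred.nodup_rightInvSeq
    have hj' : j < (cs.rightInvSeq ω).length := by simpa using hj
    have hl' : l < (cs.rightInvSeq ω).length := by simpa using hl
    rw [List.getD_eq_getElem _ _ hj', List.getD_eq_getElem _ _ hl'] at h'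
    exact (List.Nodup.getElem_inj_iff hnd).mp h'
  · rintro rfl; rfl
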